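/- arXiv:2111.02556 — 3 statements merged into one kernel-verified Lean document; each statement's English description precedes it below -/
import Mathlib

section
/- Let K_ω > 0, δ, ξ, a ∈ ℝ, let Φ₁, Φ₂ : ℝ × ℝ → ℝ be continuous at the point (x, 0), and let ȳ ∈ ℝ satisfy ȳ + Φ₂(x, 0) > 0. Set λ_{(a,n)} := exp(−(2πn + a)/K_ω). Then, as n → ∞, the images in the additive circle ℝ/2πℤ of the real numbers x + ξ + λ_{(a,n)}·Φ₁(x, λ_{(a,n)}·ȳ) + (2πn + a) − K_ω·log(ȳ + Φ₂(x, λ_{(a,n)}·ȳ)) converge in ℝ/2πℤ to the image of h_a(x, ȳ) := x + ξ + a − K_ω·log(ȳ + Φ₂(x, 0)). (Equivalently, the first component of the rescaled first return map F_{λ_{(a,n)}}(x, λ_{(a,n)}·ȳ), which equals this expression mod 2π, converges to h_a(x, ȳ) mod 2π.) -/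
/-!
With `λₙ = exp (-(2πn + a)/K)`, the real number in question is `g (λₙ) + 2πn`, where
`g t = x + ξ + t Φ₁(x, tȳ) + a - K log (ȳ + Φ₂(x, tȳ))`. The summand `2πn` vanishes in `ℝ/2πℤ`,
`λₙ → 0` because `K > 0`, and `g` is continuous at `0` since `log` is continuous at
`ȳ + Φ₂(x, 0) > 0`; so the images converge to `g 0 = h_a(x, ȳ)`.
-/

open Real Filter Topology

theorem AddCircle.coe_add_nat_mul_period {p : ℝ} (y : ℝ) (n : ℕ) :
    ((y + n * p : ℝ) : AddCircle p) = y := by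
  rw [← nsmul_eq_mul, AddCircle.coe_add, AddCircle.coe_nsmul, AddCircle.coe_period, smul_zero,
    add_zero]

theorem tendsto_exp_neg_affine_div_atTop_nhds_zero {c K : ℝ} (a : ℝ) (hc : 0 < c) (hK : 0 < K) :
    Tendsto (fun n : ℕ => exp (-(c * n + a) / K)) atTop (𝓝 0) := by
  refine tendsto_exp_atBot.comp (Tendsto.atBot_div_const hK ?_)
  refine tendsto_neg_atBot_iff.mpr (tendsto_atTop_add_const_right _ a ?_)
  exact tendsto_natCast_atTop_atTop.const_mul_atTop hc

theorem continuousAt_rescaled_first_component (K ξ a : ℝ) {Φ₁ Φ₂ : ℝ × ℝ → ℝ} {x ybar : ℝ}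
    (hΦ₁ : ContinuousAt Φ₁ (x, 0)) (hΦ₂ : ContinuousAt Φ₂ (x, 0))
    (hlog : ybar + Φ₂ (x, 0) ≠ 0) :
    ContinuousAt (fun t : ℝ => x + ξ + t * Φ₁ (x, t * ybar) + a
      - K * log (ybar + Φ₂ (x, t * ybar))) 0 := by
  have hpath : ContinuousAt (fun t : ℝ => (x, t * ybar)) 0 := by fun_prop
  have hpath₀ : (x, (0 : ℝ) * ybar) = (x, 0) := by rw [zero_mul]
  have hΦ₁' := ContinuousAt.comp_of_eq hΦ₁ hpath hpath₀
  have hΦ₂' := ContinuousAt.comp_of_eq hΦ₂ hpath hpath₀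
  have hlog' : ContinuousAt (fun t : ℝ => log (ybar + Φ₂ (x, t * ybar))) 0 :=
    (continuousAt_const.add hΦ₂').log (by simpa using hlog)
  exact ((continuousAt_const.add (continuousAt_id.mul hΦ₁')).add continuousAt_const).sub
    (continuousAt_const.mul hlog')

theorem stmt_4_general (K ξ a : ℝ) (hK : 0 < K) (Φ₁ Φ₂ : ℝ × ℝ → ℝ) (x ybar : ℝ)
    (hΦ₁ : ContinuousAt Φ₁ (x, 0)) (hΦ₂ : ContinuousAt Φ₂ (x, 0))
    (hpos : 0 < ybar + Φ₂ (x, 0)) :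
    Filter.Tendsto
      (fun n : ℕ =>
        ((x + ξ
            + Real.exp (-(2 * π * n + a) / K)
              * Φ₁ (x, Real.exp (-(2 * π * n + a) / K) * ybar)
            + (2 * π * n + a)
            - K * Real.log (ybar + Φ₂ (x, Real.exp (-(2 * π * n + a) / K) * ybar)) : ℝ) :
          AddCircle (2 * π)))
      Filter.atTop
      (nhds ((x + ξ + a - K * Real.log (ybar + Φ₂ (x, 0)) : ℝ) : AddCircle (2 * π))) := by
  have hlam := tendsto_exp_neg_affine_div_atTop_nhds_zero a two_pi_pos hK
  have hg := (continuousAt_rescaled_first_component K ξ a hΦ₁ hΦ₂ hpos.ne').tendsto.comp hlam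
  simp only [zero_mul, add_zero] at hg
  refine (((AddCircle.continuous_mk' (2 * π)).tendsto _).comp hg).congr fun n => ?_
  change ((_ : ℝ) : AddCircle (2 * π)) = _
  dsimp only [Function.comp_apply]
  rw [← AddCircle.coe_add_nat_mul_period _ n]
  congr 1
  ring

theorem stmt_4 (K δ ξ a : ℝ) (hK : 0 < K) (Φ₁ Φ₂ : ℝ × ℝ → ℝ) (x ybar : ℝ)
    (hΦ₁ : ContinuousAt Φ₁ (x, 0)) (hΦ₂ : ContinuousAt Φ₂ (x, 0))
    (hpos : 0 < ybar + Φ₂ (x, 0)) :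
    Filter.Tendsto
      (fun n : ℕ =>
        ((x + ξ
            + Real.exp (-(2 * π * n + a) / K)
              * Φ₁ (x, Real.exp (-(2 * π * n + a) / K) * ybar)
            + (2 * π * n + a)
            - K * Real.log (ybar + Φ₂ (x, Real.exp (-(2 * π * n + a) / K) * ybar)) : ℝ) :
          AddCircle (2 * π)))
      Filter.atTop
      (nhds ((x + ξ + a - K * Real.log (ybar + Φ₂ (x, 0)) : ℝ) : AddCircle (2 * π))) :=
  stmt_4_general K ξ a hK Φ₁ Φ₂ x ybar hΦ₁ hΦ₂ hpos
end

section
/- Let K_ω > 0, δ > 1, ξ, a ∈ ℝ, and let Φ₁, Φ₂ : ℝ × ℝ → ℝ be continuous functions that are 2π-periodic in their first variable and such that Φ₂(x,0) > 0 for every x ∈ ℝ. Set λ_{(a,n)} := exp(−(2πn + a)/K_ω). Then: (i) there exists N such that for all n ≥ N and all (x,ȳ) ∈ ℝ × [0,1], ȳ + Φ₂(x, λ_{(a,n)}·ȳ) > 0, so that the rescaled return maps G_n(x,ȳ) := ( [x + ξ + λ_{(a,n)}·Φ₁(x, λ_{(a,n)}ȳ) + a − K_ω·log(ȳ + Φ₂(x,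 λ_{(a,n)}ȳ))] mod 2π , λ_{(a,n)}^{δ−1}·(ȳ + Φ₂(x, λ_{(a,n)}ȳ))^δ ) ∈ (ℝ/2πℤ) × ℝ are defined on all of ℝ × [0,1]; and (ii) G_n converges uniformly on ℝ × [0,1] to the map (x,ȳ) ↦ ( [x + ξ + a − K_ω·log(ȳ + Φ₂(x,0))] mod 2π , 0 ), where (ℝ/2πℤ) × ℝ carries the product of the standard circle metric and the euclidean metric. -/
/-!
Replace the contraction rate `λ_{(a,n)}` by a real parameter `t`. The resulting map of `(t, x, ȳ)`
is jointly continuous wherever `ȳ + Φ₂(x, tȳ) ≠ 0`, in particular at every `(0, x, ȳ)` with `ȳ ≥ 0`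
(the factor `t ^ (δ - 1)` is continuous at `0` because `δ > 1`). Joint continuity at `t = 0` on the
compact fundamental domain `[0, 2π] × [0, 1]` gives uniform convergence as `t → 0`, hence along
`λ_{(a,n)} → 0`, and `2π`-periodicity in `x` extends it to `ℝ × [0, 1]`. Part (i) is the same
argument applied to `ȳ + Φ₂(x, tȳ)`, whose limit is bounded below by a positive constant on the
compact domain.
-/

open Real Filter Topology Set Function

theorem tendstoUniformlyOn_of_continuousAt {α β γ : Type*} [TopologicalSpace α]
    [TopologicalSpace β] [UniformSpace γ] {F : α → β → γ} {x₀ : α} {s : Set β}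
    (hs : IsCompact s) (hF : ∀ y ∈ s, ContinuousAt ↿F (x₀, y)) :
    TendstoUniformlyOn F (F x₀) (𝓝 x₀) s := by
  rw [← tendstoLocallyUniformlyOn_iff_tendstoUniformlyOn_of_compact hs,
    tendstoLocallyUniformlyOn_iff_forall_tendsto]
  intro y hy
  have hle : 𝓝 x₀ ×ˢ 𝓝[s] y ≤ 𝓝 (x₀, y) := by
    rw [nhds_prod_eq]; exact prod_mono le_rfl nhdsWithin_le_nhds
  have hslice : Tendsto (fun q : α × β => (x₀, q.2)) (𝓝 x₀ ×ˢ 𝓝[s] y) (𝓝 (x₀, y)) :=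
    ((continuous_const.prodMk continuous_snd).tendsto' (x₀, y) (x₀, y) rfl).mono_left hle
  exact (((hF y hy).tendsto.comp hslice).prodMk_nhds ((hF y hy).tendsto.mono_left hle)).mono_right
    (nhds_le_uniformity _)

theorem TendstoUniformlyOn.comp_tendsto {ι ι' α β : Type*} [UniformSpace β]
    {F : ι → α → β} {f : α → β} {l : Filter ι} {l' : Filter ι'} {s : Set α}
    (h : TendstoUniformlyOn F f l s) {u : ι' → ι} (hu : Tendsto u l' l) :
    TendstoUniformlyOn (fun i => F (u i)) f l' s :=
  fun V hV => hu.eventually (h V hV)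

theorem TendstoUniformlyOn.eventually_forall_pos {ι α : Type*} [TopologicalSpace α]
    {F : ι → α → ℝ} {f : α → ℝ} {l : Filter ι} {s : Set α} (h : TendstoUniformlyOn F f l s)
    (hs : IsCompact s) (hf : ContinuousOn f s) (hpos : ∀ x ∈ s, 0 < f x) :
    ∀ᶠ i in l, ∀ x ∈ s, 0 < F i x := by
  obtain ⟨m, hm, hmf⟩ := hs.exists_forall_le' hf hpos
  filter_upwards [Metric.tendstoUniformlyOn_iff.mp h m hm] with i hi x hx
  linarith [hmf x hx, (abs_lt.mp (Real.dist_eq _ _ ▸ hi x hx)).2]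

theorem forall_mem_univ_prod_of_periodic {α : Type*} {P : ℝ × α → Prop} {c : ℝ} (hc : 0 < c)
    (hP : ∀ y, Periodic (fun x => P (x, y)) c) {s : Set α} (h : ∀ p ∈ Icc 0 c ×ˢ s, P p) :
    ∀ p ∈ univ ×ˢ s, P p := by
  rintro ⟨x, y⟩ ⟨-, hy⟩
  obtain ⟨x', hx', hPx⟩ := (hP y).exists_mem_Ico₀ hc x
  exact (hPx ▸ h (x', y) ⟨Ico_subset_Icc_self hx', hy⟩ :)

theorem TendstoUniformlyOn.univ_prod_of_periodic {ι α β : Type*} [UniformSpace β]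
    {F : ι → ℝ × α → β} {f : ℝ × α → β} {l : Filter ι} {c : ℝ} {s : Set α} (hc : 0 < c)
    (hF : ∀ i y, Periodic (fun x => F i (x, y)) c) (hf : ∀ y, Periodic (fun x => f (x, y)) c)
    (h : TendstoUniformlyOn F f l (Icc 0 c ×ˢ s)) : TendstoUniformlyOn F f l (univ ×ˢ s) :=
  fun V hV => (h V hV).mono fun i hi =>
    forall_mem_univ_prod_of_periodic hc (fun y x => by simp only [hF i y x, hf y x]) hi

theorem tendsto_exp_neg_affine_div_atTop {c a K : ℝ} (hc : 0 < c) (hK : 0 < K) :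
    Tendsto (fun n : ℕ => exp (-(c * n + a) / K)) atTop (𝓝 0) := by
  refine tendsto_exp_atBot.comp (Tendsto.atBot_div_const hK (tendsto_neg_atTop_atBot.comp ?_))
  exact tendsto_atTop_add_const_right _ a
    (tendsto_natCast_atTop_atTop.const_mul_atTop hc)

section ReturnMap

variable (K δ ξ a : ℝ) (Φ₁ Φ₂ : ℝ × ℝ → ℝ)

/-- The map `G_n` with `λ_{(a,n)}` replaced by `t`. -/
noncomputable def rescaledReturnMap (t : ℝ) (p : ℝ × ℝ) : AddCircle (2 * π) × ℝ :=
  (((p.1 + ξ + t * Φ₁ (p.1, t * p.2) + a - K * log (p.2 + Φ₂ (p.1, t * p.2)) : ℝ) :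
      AddCircle (2 * π)),
    t ^ (δ - 1) * (p.2 + Φ₂ (p.1, t * p.2)) ^ δ)

variable {K δ ξ a Φ₁ Φ₂}

theorem rescaledReturnMap_zero (hδ : 1 < δ) :
    rescaledReturnMap K δ ξ a Φ₁ Φ₂ 0 =
      fun p => (((p.1 + ξ + a - K * log (p.2 + Φ₂ (p.1, 0)) : ℝ) : AddCircle (2 * π)), 0) := by
  ext p <;> simp [rescaledReturnMap, zero_rpow (sub_ne_zero.mpr hδ.ne')]

theorem periodic_rescaledReturnMap (hper₁ : ∀ x y : ℝ, Φ₁ (x + 2 * π, y) = Φ₁ (x, y))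
    (hper₂ : ∀ x y : ℝ, Φ₂ (x + 2 * π, y) = Φ₂ (x, y)) (t y : ℝ) :
    Periodic (fun x => rescaledReturnMap K δ ξ a Φ₁ Φ₂ t (x, y)) (2 * π) := by
  intro x
  simp only [rescaledReturnMap, hper₁, hper₂, Prod.mk.injEq, and_true]
  exact (congrArg _ (by ring)).trans (AddCircle.coe_add_period (2 * π) _)

theorem continuousAt_rescaledReturnMap (hδ : 1 ≤ δ) (hc₁ : Continuous Φ₁) (hc₂ : Continuous Φ₂)
    {t : ℝ} {p : ℝ × ℝ} (hp : p.2 + Φ₂ (p.1, t * p.2) ≠ 0) :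
    ContinuousAt ↿(rescaledReturnMap K δ ξ a Φ₁ Φ₂) (t, p) := by
  have hΦ₂ : Continuous fun q : ℝ × ℝ × ℝ => q.2.2 + Φ₂ (q.2.1, q.1 * q.2.2) := by fun_prop
  refine ContinuousAt.prodMk ?_ ?_
  · refine (AddCircle.continuous_mk' _).continuousAt.comp (f := fun q : ℝ × ℝ × ℝ => _) ?_
    exact ((by fun_prop : Continuous fun q : ℝ × ℝ × ℝ =>
      q.2.1 + ξ + q.1 * Φ₁ (q.2.1, q.1 * q.2.2) + a).continuousAt).sub
      (continuousAt_const.mul (hΦ₂.continuousAt.log hp))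
  · exact (((continuous_rpow_const (by linarith)).comp continuous_fst).mul
      ((continuous_rpow_const (by linarith)).comp hΦ₂)).continuousAt

end ReturnMap

theorem stmt_6 (K δ ξ a : ℝ) (hK : 0 < K) (hδ : 1 < δ)
    (Φ₁ Φ₂ : ℝ × ℝ → ℝ) (hc₁ : Continuous Φ₁) (hc₂ : Continuous Φ₂)
    (hper₁ : ∀ x y : ℝ, Φ₁ (x + 2 * π, y) = Φ₁ (x, y))
    (hper₂ : ∀ x y : ℝ, Φ₂ (x + 2 * π, y) = Φ₂ (x, y))
    (hpos : ∀ x : ℝ, 0 < Φ₂ (x, 0)) :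
    (∃ N : ℕ, ∀ n ≥ N, ∀ p : ℝ × ℝ, p ∈ Set.univ ×ˢ Set.Icc (0:ℝ) 1 →
        0 < p.2 + Φ₂ (p.1, Real.exp (-(2 * π * n + a) / K) * p.2)) ∧
    TendstoUniformlyOn
      (fun (n : ℕ) (p : ℝ × ℝ) =>
        (((p.1 + ξ
              + Real.exp (-(2 * π * n + a) / K)
                * Φ₁ (p.1, Real.exp (-(2 * π * n + a) / K) * p.2)
              + a
              - K * Real.log (p.2 + Φ₂ (p.1, Real.exp (-(2 * π * n + a) / K) * p.2)) : ℝ) :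
            AddCircle (2 * π)),
          Real.exp (-(2 * π * n + a) / K) ^ (δ - 1)
            * (p.2 + Φ₂ (p.1, Real.exp (-(2 * π * n + a) / K) * p.2)) ^ δ))
      (fun p : ℝ × ℝ =>
        (((p.1 + ξ + a - K * Real.log (p.2 + Φ₂ (p.1, 0)) : ℝ) : AddCircle (2 * π)),
          (0 : ℝ)))
      Filter.atTop
      (Set.univ ×ˢ Set.Icc (0:ℝ) 1) := by
  set s := Icc (0 : ℝ) (2 * π) ×ˢ Icc (0 : ℝ) 1
  have hs : IsCompact s := isCompact_Icc.prod isCompact_Icc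
  have hrate := tendsto_exp_neg_affine_div_atTop (a := a) two_pi_pos hK
  have hB₀ : ∀ p ∈ s, 0 < p.2 + Φ₂ (p.1, 0 * p.2) := fun p hp => by
    rw [zero_mul]; exact add_pos_of_nonneg_of_pos hp.2.1 (hpos p.1)
  have hB : TendstoUniformlyOn (fun t (p : ℝ × ℝ) => p.2 + Φ₂ (p.1, t * p.2))
      (fun p => p.2 + Φ₂ (p.1, 0 * p.2)) (𝓝 0) s :=
    tendstoUniformlyOn_of_continuousAt hs fun p _ => by
      simp only [HasUncurry.uncurry]; fun_prop
  have hG : TendstoUniformlyOn (rescaledReturnMap K δ ξ a Φ₁ Φ₂)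
      (rescaledReturnMap K δ ξ a Φ₁ Φ₂ 0) (𝓝 0) s :=
    tendstoUniformlyOn_of_continuousAt hs fun p hp =>
      continuousAt_rescaledReturnMap hδ.le hc₁ hc₂ (hB₀ p hp).ne'
  refine ⟨eventually_atTop.mp ?_, ?_⟩
  · filter_upwards [(hB.comp_tendsto hrate).eventually_forall_pos hs (by fun_prop) hB₀]
      with n hn
    exact forall_mem_univ_prod_of_periodic two_pi_pos (fun y x => by simp only [hper₂]) hn
  · rw [← rescaledReturnMap_zero hδ]
    exact (hG.comp_tendsto hrate).univ_prod_of_periodic two_pi_pos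
      (fun n => periodic_rescaledReturnMap hper₁ hper₂ _) (periodic_rescaledReturnMap hper₁ hper₂ 0)
end

section
/- Let K_ω ∈ ℝ, δ > 1, ξ ∈ ℝ, and let Φ₁, Φ₂ : ℝ × ℝ → ℝ be C¹ functions that are 2π-periodic in their first variable and such that Φ₂(x, y) > 0 for all (x,y) ∈ ℝ × [0,1]. Then there exist λ₂ ∈ (0,1) and k > 1 such that for every λ ∈ (0, λ₂) and all (x₁, ȳ₁), (x₂, ȳ₂) ∈ ℝ × [0,1], the first return map F_λ = η ∘ Ψ_λ is differentiable at the rescaled points (x₁, λȳ₁) and (x₂, λȳ₂), the determinants det DF_λ(x₁, λȳ₁) and det DF_λ(x₂, λȳ₂) are nonzero, and |det DF_λ(x₁, λȳ₁)| ≤ k·|det DF_λ(x₂, λȳ₂)|. -/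
open Real

/-- The local map past the two saddle-foci (in local coordinates). -/
noncomputable def etaMap (K δ : ℝ) : ℝ × ℝ → ℝ × ℝ :=
  fun p => (p.1 - K * Real.log p.2, p.2 ^ δ)

/-- The global transition map along the broken 2-dimensional connection. -/
noncomputable def psiMap (ξ lam : ℝ) (Φ₁ Φ₂ : ℝ × ℝ → ℝ) : ℝ × ℝ → ℝ × ℝ :=
  fun p => (p.1 + ξ + lam * Φ₁ p, p.2 + lam * Φ₂ p)

/-!
By the chain rule, `det DF_λ(p) = δ · (Ψ_λ(p)₂)^(δ-1) · det (I + λ DΦ(p))` with `Φ = (Φ₁, Φ₂)`.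
At `p = (x, λȳ)` the second coordinate `Ψ_λ(p)₂ = λ (ȳ + Φ₂ p)` lies in `[λm, λ(1+M)]`, where
`0 < m ≤ Φ₂ ≤ M` on the strip `ℝ × [0,1]`, and `det (I + λ DΦ) ∈ [1/2, 2]` as soon as
`λ ‖DΦ‖ ≤ 1/4`. Both bounds are uniform because a continuous function periodic in `x` takes on
the strip only the values it takes on a compact rectangle. The factor `λ` cancels in the ratio
of two determinants, which is therefore at most `4 ((1+M)/m)^(δ-1)`.
-/

open Set

theorem LinearMap.det_endo_prod {R : Type*} [CommRing R] (f : R × R →ₗ[R] R × R) :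
    LinearMap.det f = (f (1, 0)).1 * (f (0, 1)).2 - (f (0, 1)).1 * (f (1, 0)).2 := by
  rw [← LinearMap.det_toMatrix (Module.Basis.finTwoProd R), Matrix.det_fin_two]
  simp [LinearMap.toMatrix_apply, mul_comm]

theorem det_id_add_mem_Icc (L : ℝ × ℝ →L[ℝ] ℝ × ℝ) (hL : ‖L‖ ≤ 1 / 4) :
    LinearMap.det ((ContinuousLinearMap.id ℝ (ℝ × ℝ) + L : ℝ × ℝ →L[ℝ] ℝ × ℝ) :
      ℝ × ℝ →ₗ[ℝ] ℝ × ℝ) ∈ Icc (1 / 2) 2 := by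
  have entry : ∀ e : ℝ × ℝ, ‖e‖ = 1 → |(L e).1| ≤ 1 / 4 ∧ |(L e).2| ≤ 1 / 4 := by
    intro e he
    have : ‖L e‖ ≤ 1 / 4 := (L.le_opNorm e).trans (by rw [he, mul_one]; exact hL)
    exact ⟨(norm_fst_le _).trans this, (norm_snd_le _).trans this⟩
  obtain ⟨ha, hc⟩ := entry (1, 0) (by simp)
  obtain ⟨hb, hd⟩ := entry (0, 1) (by simp)
  rw [abs_le] at ha hb hc hd
  rw [LinearMap.det_endo_prod]
  simp only [ContinuousLinearMap.coe_coe, add_apply, ContinuousLinearMap.id_apply, Prod.fst_add,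
    Prod.snd_add]
  constructor <;> nlinarith

theorem isCompact_image_univ_prod_of_periodic {α : Type*} [TopologicalSpace α]
    {g : ℝ × ℝ → α} {c : ℝ} (hc : 0 < c) (hg : Continuous g)
    (hper : ∀ x y, g (x + c, y) = g (x, y)) {s : Set ℝ} (hs : IsCompact s) :
    IsCompact (g '' (univ ×ˢ s)) := by
  suffices g '' (univ ×ˢ s) = g '' (Icc 0 c ×ˢ s) from
    this ▸ (isCompact_Icc.prod hs).image hg
  refine (image_mono (prod_mono (subset_univ _) le_rfl)).antisymm' ?_
  rintro _ ⟨⟨x, y⟩, ⟨-, hy⟩, rfl⟩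
  obtain ⟨x₀, hx₀, hx⟩ := Function.Periodic.exists_mem_Ico₀ (f := fun t => g (t, y))
    (fun t => hper t y) hc x
  exact ⟨(x₀, y), ⟨Ico_subset_Icc_self hx₀, hy⟩, hx.symm⟩

theorem fderiv_periodic_fst {F : Type*} [NormedAddCommGroup F] [NormedSpace ℝ F]
    {f : ℝ × ℝ → F} {c : ℝ} (hper : ∀ x y, f (x + c, y) = f (x, y)) (x y : ℝ) :
    fderiv ℝ f (x + c, y) = fderiv ℝ f (x, y) := by
  have hshift : (fun p : ℝ × ℝ => f (p + (c, 0))) = f := by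
    funext p; rw [← hper p.1 p.2]; congr 1; ext <;> simp
  simpa [hshift] using (fderiv_comp_add_right (f := f) (x := (x, y)) (c, 0)).symm

theorem exists_pos_bounds_of_periodic {g : ℝ × ℝ → ℝ} {c : ℝ} (hc : 0 < c) (hg : Continuous g)
    (hper : ∀ x y, g (x + c, y) = g (x, y)) {s : Set ℝ} (hs : IsCompact s) (hne : s.Nonempty)
    (hpos : ∀ x, ∀ y ∈ s, 0 < g (x, y)) :
    ∃ m > 0, ∃ M, ∀ x, ∀ y ∈ s, m ≤ g (x, y) ∧ g (x, y) ≤ M := by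
  have hK := isCompact_image_univ_prod_of_periodic hc hg hper hs
  have hKne : (g '' (univ ×ˢ s)).Nonempty := (univ_nonempty.prod hne).image g
  obtain ⟨_, ⟨⟨x₀, y₀⟩, ⟨-, hy₀⟩, rfl⟩, hmin⟩ := hK.exists_isLeast hKne
  obtain ⟨M, hM⟩ := hK.bddAbove
  exact ⟨g (x₀, y₀), hpos x₀ y₀ hy₀, M, fun x y hy =>
    ⟨hmin ⟨(x, y), ⟨mem_univ x, hy⟩, rfl⟩, hM ⟨(x, y), ⟨mem_univ x, hy⟩, rfl⟩⟩⟩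

theorem exists_norm_fderiv_le_of_periodic {F : Type*} [NormedAddCommGroup F] [NormedSpace ℝ F]
    {f : ℝ × ℝ → F} {c : ℝ} (hc : 0 < c) (hf : ContDiff ℝ 1 f)
    (hper : ∀ x y, f (x + c, y) = f (x, y)) {s : Set ℝ} (hs : IsCompact s) :
    ∃ C > 0, ∀ x, ∀ y ∈ s, ‖fderiv ℝ f (x, y)‖ ≤ C := by
  obtain ⟨C, hC, hbound⟩ := (isCompact_image_univ_prod_of_periodic hc
    (hf.continuous_fderiv one_ne_zero) (fderiv_periodic_fst hper) hs).isBounded.exists_pos_norm_le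
  exact ⟨C, hC, fun x y hy => hbound _ ⟨(x, y), ⟨mem_univ x, hy⟩, rfl⟩⟩

theorem hasFDerivAt_etaMap (K δ : ℝ) {q : ℝ × ℝ} (hq : 0 < q.2) :
    HasFDerivAt (etaMap K δ)
      ((ContinuousLinearMap.fst ℝ ℝ ℝ - (K / q.2) • ContinuousLinearMap.snd ℝ ℝ ℝ).prod
        ((δ * q.2 ^ (δ - 1)) • ContinuousLinearMap.snd ℝ ℝ ℝ)) q := by
  have hsnd : HasFDerivAt (Prod.snd : ℝ × ℝ → ℝ) (ContinuousLinearMap.snd ℝ ℝ ℝ) q :=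
    hasFDerivAt_snd
  have hlog := (hasDerivAt_log hq.ne').comp_hasFDerivAt q hsnd
  have hpow := (hasDerivAt_rpow_const (p := δ) (Or.inl hq.ne')).comp_hasFDerivAt q hsnd
  refine ((hasFDerivAt_fst.sub (hlog.const_mul K)).prodMk hpow).congr_fderiv ?_
  ext <;> simp [div_eq_mul_inv]

theorem det_fderiv_etaMap (K δ : ℝ) {q : ℝ × ℝ} (hq : 0 < q.2) :
    LinearMap.det (fderiv ℝ (etaMap K δ) q : ℝ × ℝ →ₗ[ℝ] ℝ × ℝ) = δ * q.2 ^ (δ - 1) := by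
  rw [(hasFDerivAt_etaMap K δ hq).fderiv, LinearMap.det_endo_prod]
  simp

theorem hasFDerivAt_psiMap (ξ lam : ℝ) {Φ₁ Φ₂ : ℝ × ℝ → ℝ} {p : ℝ × ℝ}
    (hΦ : DifferentiableAt ℝ (fun q => (Φ₁ q, Φ₂ q)) p) :
    HasFDerivAt (psiMap ξ lam Φ₁ Φ₂)
      (ContinuousLinearMap.id ℝ (ℝ × ℝ) + lam • fderiv ℝ (fun q => (Φ₁ q, Φ₂ q)) p) p := by
  have h : psiMap ξ lam Φ₁ Φ₂ = fun q => q + (ξ, 0) + lam • (Φ₁ q, Φ₂ q) := by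
    funext q; ext <;> simp [psiMap]
  rw [h]
  exact ((hasFDerivAt_id p).add_const _).add (hΦ.hasFDerivAt.const_smul lam)

theorem det_fderiv_etaMap_comp_psiMap (K δ ξ lam : ℝ) {Φ₁ Φ₂ : ℝ × ℝ → ℝ} {p : ℝ × ℝ}
    (hΦ : DifferentiableAt ℝ (fun q => (Φ₁ q, Φ₂ q)) p) (hp : 0 < (psiMap ξ lam Φ₁ Φ₂ p).2) :
    DifferentiableAt ℝ (etaMap K δ ∘ psiMap ξ lam Φ₁ Φ₂) p ∧
      LinearMap.det (fderiv ℝ (etaMap K δ ∘ psiMap ξ lam Φ₁ Φ₂) p : ℝ × ℝ →ₗ[ℝ] ℝ × ℝ) =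
        δ * (psiMap ξ lam Φ₁ Φ₂ p).2 ^ (δ - 1) *
          LinearMap.det ((ContinuousLinearMap.id ℝ (ℝ × ℝ) +
            lam • fderiv ℝ (fun q => (Φ₁ q, Φ₂ q)) p : ℝ × ℝ →L[ℝ] ℝ × ℝ) : ℝ × ℝ →ₗ[ℝ] ℝ × ℝ) := by
  have hη := hasFDerivAt_etaMap K δ hp
  have hcomp := hη.comp p (hasFDerivAt_psiMap ξ lam hΦ)
  refine ⟨hcomp.differentiableAt, ?_⟩
  rw [hcomp.fderiv, ContinuousLinearMap.toLinearMap_comp, LinearMap.det_comp, ← hη.fderiv,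
    det_fderiv_etaMap K δ hp]

theorem abs_mul_rpow_mul_le {δ e a b v₁ v₂ d₁ d₂ : ℝ} (hδ : 0 < δ) (he : 0 ≤ e) (ha : 0 < a)
    (hv₁ : v₁ ∈ Icc a b) (hv₂ : v₂ ∈ Icc a b) (hd₁ : d₁ ∈ Icc (1 / 2) 2)
    (hd₂ : d₂ ∈ Icc (1 / 2) 2) :
    |δ * v₁ ^ e * d₁| ≤ 4 * (b / a) ^ e * |δ * v₂ ^ e * d₂| := by
  have hv₁0 : 0 < v₁ := ha.trans_le hv₁.1
  have hv₂0 : 0 < v₂ := ha.trans_le hv₂.1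
  have hba : 0 < b / a := div_pos (hv₁0.trans_le hv₁.2) ha
  have hpow : v₁ ^ e ≤ (b / a) ^ e * v₂ ^ e := by
    rw [← mul_rpow hba.le hv₂0.le]
    refine rpow_le_rpow hv₁0.le (hv₁.2.trans ?_) he
    calc b = b / a * a := (div_mul_cancel₀ b ha.ne').symm
      _ ≤ b / a * v₂ := mul_le_mul_of_nonneg_left hv₂.1 hba.le
  have hd₁0 : 0 < d₁ := by linarith [hd₁.1]
  have hd₂0 : 0 < d₂ := by linarith [hd₂.1]
  rw [abs_of_pos (by positivity), abs_of_pos (by positivity)]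
  calc δ * v₁ ^ e * d₁ ≤ δ * ((b / a) ^ e * v₂ ^ e) * (4 * d₂) := by
        gcongr
        linarith [hd₁.2, hd₂.1]
    _ = 4 * (b / a) ^ e * (δ * v₂ ^ e * d₂) := by ring

theorem exists_det_fderiv_etaMap_comp_psiMap_eq {K δ ξ lam m M C : ℝ} {Φ₁ Φ₂ : ℝ × ℝ → ℝ}
    (hΦ : Differentiable ℝ (fun q => (Φ₁ q, Φ₂ q)))
    (hΦ₂ : ∀ x, ∀ y ∈ Icc (0 : ℝ) 1, m ≤ Φ₂ (x, y) ∧ Φ₂ (x, y) ≤ M) (hm : 0 < m)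
    (hDΦ : ∀ x, ∀ y ∈ Icc (0 : ℝ) 1, ‖fderiv ℝ (fun q => (Φ₁ q, Φ₂ q)) (x, y)‖ ≤ C)
    (hlam : 0 < lam) (hlam₁ : lam ≤ 1) (hlamC : lam * C ≤ 1 / 4)
    (x : ℝ) {y : ℝ} (hy : y ∈ Icc (0 : ℝ) 1) :
    DifferentiableAt ℝ (etaMap K δ ∘ psiMap ξ lam Φ₁ Φ₂) (x, lam * y) ∧
      ∃ v ∈ Icc (lam * m) (lam * (1 + M)), ∃ d ∈ Icc (1 / 2 : ℝ) 2,
        LinearMap.det (fderiv ℝ (etaMap K δ ∘ psiMap ξ lam Φ₁ Φ₂) (x, lam * y) :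
          ℝ × ℝ →ₗ[ℝ] ℝ × ℝ) = δ * v ^ (δ - 1) * d := by
  have hlamy : lam * y ∈ Icc (0 : ℝ) 1 :=
    ⟨mul_nonneg hlam.le hy.1, mul_le_one₀ hlam₁ hy.1 hy.2⟩
  obtain ⟨hmΦ, hΦM⟩ := hΦ₂ x _ hlamy
  have hψ : (psiMap ξ lam Φ₁ Φ₂ (x, lam * y)).2 = lam * (y + Φ₂ (x, lam * y)) := by
    simp only [psiMap]; ring
  have hv : lam * (y + Φ₂ (x, lam * y)) ∈ Icc (lam * m) (lam * (1 + M)) :=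
    ⟨by gcongr; linarith [hy.1], by gcongr; linarith [hy.2]⟩
  obtain ⟨hdiff, hdet⟩ := det_fderiv_etaMap_comp_psiMap K δ ξ lam (hΦ _)
    (hψ ▸ (mul_pos hlam hm).trans_le hv.1)
  refine ⟨hdiff, _, hv, _, det_id_add_mem_Icc _ ?_, hψ ▸ hdet⟩
  rw [norm_smul, Real.norm_of_nonneg hlam.le]
  exact (mul_le_mul_of_nonneg_left (hDΦ x _ hlamy) hlam.le).trans hlamC

theorem stmt_10 (K δ ξ : ℝ) (hδ : 1 < δ) (Φ₁ Φ₂ : ℝ × ℝ → ℝ)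
    (hΦ₁ : ContDiff ℝ 1 Φ₁) (hΦ₂ : ContDiff ℝ 1 Φ₂)
    (hper₁ : ∀ x y : ℝ, Φ₁ (x + 2 * π, y) = Φ₁ (x, y))
    (hper₂ : ∀ x y : ℝ, Φ₂ (x + 2 * π, y) = Φ₂ (x, y))
    (hpos : ∀ x : ℝ, ∀ y ∈ Set.Icc (0:ℝ) 1, 0 < Φ₂ (x, y)) :
    ∃ lam₂ : ℝ, 0 < lam₂ ∧ lam₂ < 1 ∧ ∃ k : ℝ, 1 < k ∧
      ∀ lam : ℝ, 0 < lam → lam < lam₂ →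
        ∀ x₁ x₂ : ℝ, ∀ y₁ ∈ Set.Icc (0:ℝ) 1, ∀ y₂ ∈ Set.Icc (0:ℝ) 1,
          DifferentiableAt ℝ (etaMap K δ ∘ psiMap ξ lam Φ₁ Φ₂) (x₁, lam * y₁) ∧
          DifferentiableAt ℝ (etaMap K δ ∘ psiMap ξ lam Φ₁ Φ₂) (x₂, lam * y₂) ∧
          LinearMap.det
              ((fderiv ℝ (etaMap K δ ∘ psiMap ξ lam Φ₁ Φ₂) (x₁, lam * y₁) :
                  (ℝ × ℝ) →L[ℝ] ℝ × ℝ) : (ℝ × ℝ) →ₗ[ℝ] ℝ × ℝ) ≠ 0 ∧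
          LinearMap.det
              ((fderiv ℝ (etaMap K δ ∘ psiMap ξ lam Φ₁ Φ₂) (x₂, lam * y₂) :
                  (ℝ × ℝ) →L[ℝ] ℝ × ℝ) : (ℝ × ℝ) →ₗ[ℝ] ℝ × ℝ) ≠ 0 ∧
          |LinearMap.det
              ((fderiv ℝ (etaMap K δ ∘ psiMap ξ lam Φ₁ Φ₂) (x₁, lam * y₁) :
                  (ℝ × ℝ) →L[ℝ] ℝ × ℝ) : (ℝ × ℝ) →ₗ[ℝ] ℝ × ℝ)| ≤
            k * |LinearMap.det
              ((fderiv ℝ (etaMap K δ ∘ psiMap ξ lam Φ₁ Φ₂) (x₂, lam * y₂) :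
                  (ℝ × ℝ) →L[ℝ] ℝ × ℝ) : (ℝ × ℝ) →ₗ[ℝ] ℝ × ℝ)| := by
  obtain ⟨m, hm, M, hΦ₂M⟩ := exists_pos_bounds_of_periodic two_pi_pos hΦ₂.continuous hper₂
    isCompact_Icc (nonempty_Icc.2 zero_le_one) hpos
  obtain ⟨C, hC, hDΦ⟩ := exists_norm_fderiv_le_of_periodic two_pi_pos (hΦ₁.prodMk hΦ₂)
    (fun x y => by simp only [hper₁, hper₂]) isCompact_Icc
  have hmM : 1 ≤ (1 + M) / m := by
    obtain ⟨h0, h1⟩ := hΦ₂M 0 0 (left_mem_Icc.2 zero_le_one)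
    rw [one_le_div hm]; linarith
  refine ⟨1 / (4 * (C + 1)), by positivity, by rw [div_lt_one (by positivity)]; linarith,
    4 * ((1 + M) / m) ^ (δ - 1), by linarith [one_le_rpow hmM (by linarith : 0 ≤ δ - 1)], ?_⟩
  intro lam hlam hlam₂ x₁ x₂ y₁ hy₁ y₂ hy₂
  rw [lt_div_iff₀ (by positivity)] at hlam₂
  have estimate := exists_det_fderiv_etaMap_comp_psiMap_eq (K := K) (δ := δ) (ξ := ξ)
    ((hΦ₁.prodMk hΦ₂).differentiable one_ne_zero) hΦ₂M hm hDΦ hlam (by nlinarith) (by nlinarith)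
  obtain ⟨hdiff₁, v₁, hv₁, d₁, hd₁, hdet₁⟩ := estimate x₁ hy₁
  obtain ⟨hdiff₂, v₂, hv₂, d₂, hd₂, hdet₂⟩ := estimate x₂ hy₂
  have hne : ∀ v ∈ Icc (lam * m) (lam * (1 + M)), ∀ d ∈ Icc (1 / 2 : ℝ) 2,
      δ * v ^ (δ - 1) * d ≠ 0 := fun v hv d hd => by
    have := (mul_pos hlam hm).trans_le hv.1
    have : 0 < d := by linarith [hd.1]
    positivity
  refine ⟨hdiff₁, hdiff₂, hdet₁ ▸ hne v₁ hv₁ d₁ hd₁, hdet₂ ▸ hne v₂ hv₂ d₂ hd₂, ?_⟩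
  rw [hdet₁, hdet₂, ← mul_div_mul_left (1 + M) m hlam.ne']
  exact abs_mul_rpow_mul_le (by linarith) (by linarith) (mul_pos hlam hm) hv₁ hv₂ hd₁ hd₂
end
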